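/- arXiv:1802.06027 — 2 statements merged into one kernel-verified Lean document; each statement's English description precedes it below -/
import Mathlib

section
/- With R defined as the path-resistance matrix of a rooted tree, two nodes n and s belong to the same level set N_m^k of a node m (for some k) if and only if R_{mn} = R_{ms}. -/
open scoped Classical

/-- A finite rooted tree encoded by a parent function: every node reaches the
root by iterating `parent`, and the root is its own parent. -/
structure GridTree (V : Type) [Fintype V] [DecidableEq V] where
  root : V
  parent : V → V
  parent_root : parent root = root
  reaches : ∀ v, ∃ k, parent^[k] v = root

namespace GridTree

variable {V : Type} [Fintype V] [DecidableEq V]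

/-- Depth of a node: distance (number of edges) to the root. -/
noncomputable def depth (T : GridTree V) (v : V) : ℕ := Nat.find (T.reaches v)

/-- The depth-`k` ancestor `α_v^k` of `v` (for `k ≤ depth v`). -/
noncomputable def anc (T : GridTree V) (v : V) (k : ℕ) : V :=
  T.parent^[T.depth v - k] v

/-- Ancestor set `A_v`: all nodes on the path from the root to `v`, including `v`. -/
def ancSet (T : GridTree V) (v : V) : Set V := {u | ∃ j, T.parent^[j] v = u}

/-- Descendant set `D_n`: all nodes whose ancestor set contains `n`. -/
def desc (T : GridTree V) (n : V) : Set V := {m | n ∈ T.ancSet m}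

/-- The `k`-th level set `N_m^k` of node `m`. -/
noncomputable def level (T : GridTree V) (m : V) (k : ℕ) : Set V :=
  if k = T.depth m then T.desc m
  else T.desc (T.anc m k) \ T.desc (T.anc m (k + 1))

/-- A leaf: a node with no descendants other than itself. -/
def IsLeaf (T : GridTree V) (m : V) : Prop := T.desc m = {m}

/-- Path-resistance matrix: `R m n` is the sum of the resistances of edges with
both endpoints in `A_m ∩ A_n`.  The edge above a non-root node `c` (joining `c`
to its parent) has resistance `r c`. -/
noncomputable def Rmat (T : GridTree V) (r : V → ℝ) (m n : V) : ℝ :=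
  ∑ c : V, if c ∈ T.ancSet m ∧ c ∈ T.ancSet n ∧ c ≠ T.root then r c else 0

end GridTree

namespace GridTree

variable {V : Type} [Fintype V] [DecidableEq V] (T : GridTree V)

lemma iter_depth (v : V) : T.parent^[T.depth v] v = T.root := Nat.find_spec (T.reaches v)

lemma depth_le' {v : V} {j : ℕ} (h : T.parent^[j] v = T.root) : T.depth v ≤ j :=
  Nat.find_le h

lemma iter_root (j : ℕ) : T.parent^[j] T.root = T.root := by
  induction j with
  | zero => rfl
  | succ j ih => rw [Function.iterate_succ_apply', ih, T.parent_root]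

lemma iter_of_ge {v : V} {j : ℕ} (h : T.depth v ≤ j) : T.parent^[j] v = T.root := by
  have hj : j = (j - T.depth v) + T.depth v := by omega
  rw [hj, Function.iterate_add_apply, T.iter_depth, T.iter_root]

lemma depth_iter (v : V) (j : ℕ) : T.depth (T.parent^[j] v) = T.depth v - j := by
  apply le_antisymm
  · apply T.depth_le'
    rw [← Function.iterate_add_apply]
    exact T.iter_of_ge (by omega)
  · have := T.iter_depth (T.parent^[j] v)
    rw [← Function.iterate_add_apply] at this
    have := T.depth_le' this
    omega

lemma mem_ancSet_iff {u v : V} :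
    u ∈ T.ancSet v ↔ T.parent^[T.depth v - T.depth u] v = u := by
  constructor
  · rintro ⟨j, rfl⟩
    have hd := T.depth_iter v j
    by_cases hj : j ≤ T.depth v
    · have : T.depth v - T.depth (T.parent^[j] v) = j := by omega
      rw [this]
    · have h1 : T.parent^[j] v = T.root := T.iter_of_ge (by omega)
      have h2 : T.depth (T.parent^[j] v) = 0 := by omega
      rw [h2, Nat.sub_zero, T.iter_depth, h1]
  · intro h
    exact ⟨_, h⟩

lemma mem_ancSet_self (v : V) : v ∈ T.ancSet v := ⟨0, rfl⟩

lemma root_mem_ancSet (v : V) : T.root ∈ T.ancSet v := ⟨T.depth v, T.iter_depth v⟩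

lemma mem_ancSet_root {u : V} (h : u ∈ T.ancSet T.root) : u = T.root := by
  obtain ⟨j, rfl⟩ := h
  exact T.iter_root j

lemma depth_mono {u v : V} (h : u ∈ T.ancSet v) : T.depth u ≤ T.depth v := by
  obtain ⟨j, rfl⟩ := h
  rw [T.depth_iter]; omega

lemma ancSet_trans {u w v : V} (h1 : u ∈ T.ancSet w) (h2 : w ∈ T.ancSet v) :
    u ∈ T.ancSet v := by
  obtain ⟨i, rfl⟩ := h1
  obtain ⟨j, rfl⟩ := h2
  exact ⟨i + j, (Function.iterate_add_apply _ i j v)⟩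

lemma ancSet_chain {u w v : V} (hu : u ∈ T.ancSet v) (hw : w ∈ T.ancSet v)
    (hd : T.depth u ≤ T.depth w) : u ∈ T.ancSet w := by
  have hdw : T.depth w ≤ T.depth v := T.depth_mono hw
  have hdu : T.depth u ≤ T.depth v := T.depth_mono hu
  rw [T.mem_ancSet_iff] at hu hw
  have h : T.depth w - T.depth u + (T.depth v - T.depth w) = T.depth v - T.depth u := by omega
  have key : T.parent^[T.depth w - T.depth u + (T.depth v - T.depth w)] v = u := by rw [h, hu]
  rw [Function.iterate_add_apply, hw] at key
  exact ⟨_, key⟩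

lemma ancSet_antisymm {u w : V} (h1 : u ∈ T.ancSet w) (h2 : w ∈ T.ancSet u) : u = w := by
  have := T.depth_mono h1
  have := T.depth_mono h2
  rw [T.mem_ancSet_iff] at h1
  have hd : T.depth w - T.depth u = 0 := by omega
  rw [hd] at h1
  exact h1.symm

lemma anc_mem (m : V) (k : ℕ) : T.anc m k ∈ T.ancSet m := ⟨_, rfl⟩

lemma depth_anc {m : V} {k : ℕ} (hk : k ≤ T.depth m) : T.depth (T.anc m k) = k := by
  unfold anc; rw [T.depth_iter]; omega

lemma anc_of_mem {u m : V} (h : u ∈ T.ancSet m) : T.anc m (T.depth u) = u := by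
  rw [T.mem_ancSet_iff] at h
  exact h

lemma lca_ex (m n : V) : ∃ j, T.parent^[j] m ∈ T.ancSet n :=
  ⟨T.depth m, by rw [T.iter_depth]; exact T.root_mem_ancSet n⟩

noncomputable def lca (m n : V) : V := T.parent^[Nat.find (T.lca_ex m n)] m

lemma lca_mem_left (m n : V) : T.lca m n ∈ T.ancSet m := ⟨_, rfl⟩

lemma lca_mem_right (m n : V) : T.lca m n ∈ T.ancSet n := Nat.find_spec (T.lca_ex m n)

lemma mem_lca {c m n : V} (hm : c ∈ T.ancSet m) (hn : c ∈ T.ancSet n) :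
    c ∈ T.ancSet (T.lca m n) := by
  set j0 := Nat.find (T.lca_ex m n) with hj0
  have hj0le : j0 ≤ T.depth m := Nat.find_le (by rw [T.iter_depth]; exact T.root_mem_ancSet n)
  have hdl : T.depth (T.lca m n) = T.depth m - j0 := T.depth_iter m j0
  have hdc : T.depth c ≤ T.depth m := T.depth_mono hm
  by_cases hle : T.depth c ≤ T.depth (T.lca m n)
  · exact T.ancSet_chain hm (T.lca_mem_left m n) hle
  · exfalso
    have hlt : T.depth m - T.depth c < j0 := by omega
    have := Nat.find_min (T.lca_ex m n) hlt
    rw [T.mem_ancSet_iff] at hm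
    rw [hm] at this
    exact this hn

noncomputable def fsum (r : V → ℝ) (u : V) : ℝ :=
  ∑ c : V, if c ∈ T.ancSet u ∧ c ≠ T.root then r c else 0

lemma Rmat_eq_fsum (r : V → ℝ) (m n : V) : T.Rmat r m n = T.fsum r (T.lca m n) := by
  unfold Rmat fsum
  apply Finset.sum_congr rfl
  intro c _
  congr 1
  apply propext
  constructor
  · rintro ⟨h1, h2, h3⟩
    exact ⟨T.mem_lca h1 h2, h3⟩
  · rintro ⟨h1, h3⟩
    exact ⟨T.ancSet_trans h1 (T.lca_mem_left m n),
      T.ancSet_trans h1 (T.lca_mem_right m n), h3⟩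

lemma fsum_lt (r : V → ℝ) (hr : ∀ c, c ≠ T.root → 0 < r c) {u w : V}
    (hu : u ∈ T.ancSet w) (hne : u ≠ w) : T.fsum r u < T.fsum r w := by
  have hwroot : w ≠ T.root := by
    rintro rfl
    exact hne (T.mem_ancSet_root hu)
  apply Finset.sum_lt_sum
  · intro c _
    split_ifs with h1 h2 h3
    · exact le_refl _
    · exact absurd ⟨T.ancSet_trans h1.1 hu, h1.2⟩ h2
    · exact (hr c h3.2).le
    · exact le_refl _
  · refine ⟨w, Finset.mem_univ w, ?_⟩
    have hwu : w ∉ T.ancSet u := fun hwu => hne (T.ancSet_antisymm hu hwu)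
    rw [if_neg (by tauto), if_pos ⟨T.mem_ancSet_self w, hwroot⟩]
    exact hr w hwroot

lemma fsum_inj (r : V → ℝ) (hr : ∀ c, c ≠ T.root → 0 < r c) {u w m : V}
    (hu : u ∈ T.ancSet m) (hw : w ∈ T.ancSet m) (h : T.fsum r u = T.fsum r w) : u = w := by
  by_contra hne
  rcases le_total (T.depth u) (T.depth w) with hd | hd
  · exact absurd h (ne_of_lt (T.fsum_lt r hr (T.ancSet_chain hu hw hd) hne))
  · exact absurd h.symm (ne_of_lt (T.fsum_lt r hr (T.ancSet_chain hw hu hd) (Ne.symm hne)))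

lemma mem_level_iff {m n : V} {k : ℕ} (hk : k ≤ T.depth m) :
    n ∈ T.level m k ↔ T.lca m n = T.anc m k := by
  unfold level
  by_cases hke : k = T.depth m
  · subst hke
    rw [if_pos rfl]
    have hm : T.anc m (T.depth m) = m := by
      unfold anc; rw [Nat.sub_self]; rfl
    rw [hm]
    constructor
    · intro hn
      exact T.ancSet_antisymm (T.lca_mem_left m n) (T.mem_lca (T.mem_ancSet_self m) hn)
    · intro h
      have := T.lca_mem_right m n
      rw [h] at this
      exact this
  · rw [if_neg hke]
    have hklt : k < T.depth m := lt_of_le_of_ne hk hke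
    constructor
    · rintro ⟨h1, h2⟩
      have h1' : T.anc m k ∈ T.ancSet n := h1
      have hmem : T.anc m k ∈ T.ancSet (T.lca m n) := T.mem_lca (T.anc_mem m k) h1'
      have hdk : T.depth (T.anc m k) = k := T.depth_anc hk
      have hdkl : k ≤ T.depth (T.lca m n) := hdk ▸ T.depth_mono hmem
      have hdm : T.depth (T.lca m n) ≤ T.depth m := T.depth_mono (T.lca_mem_left m n)
      by_cases hlt : k + 1 ≤ T.depth (T.lca m n)
      · exfalso
        apply h2
        have hmem1 : T.anc m (k+1) ∈ T.ancSet (T.lca m n) := by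
          apply T.ancSet_chain (T.anc_mem m (k+1)) (T.lca_mem_left m n)
          rw [T.depth_anc (by omega)]
          exact hlt
        exact T.ancSet_trans hmem1 (T.lca_mem_right m n)
      · have hdeq : T.depth (T.lca m n) = k := by omega
        rw [← hdeq]
        exact (T.anc_of_mem (T.lca_mem_left m n)).symm
    · intro h
      constructor
      · have := T.lca_mem_right m n
        rw [h] at this
        exact this
      · intro h2
        have h2' : T.anc m (k+1) ∈ T.ancSet n := h2
        have := T.mem_lca (T.anc_mem m (k+1)) h2'
        rw [h] at this
        have := T.depth_mono this
        rw [T.depth_anc (by omega), T.depth_anc hk] at this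
        omega

end GridTree

/-- Lemma 2(ii): `n` and `s` lie in a common level set `N_m^k` of `m` iff
`R_{mn} = R_{ms}`. -/
theorem stmt4 {V : Type} [Fintype V] [DecidableEq V] (T : GridTree V)
    (r : V → ℝ) (hr : ∀ c, c ≠ T.root → 0 < r c) (m n s : V) :
    (∃ k, k ≤ T.depth m ∧ n ∈ T.level m k ∧ s ∈ T.level m k) ↔
      T.Rmat r m n = T.Rmat r m s := by
  constructor
  · rintro ⟨k, hk, hn, hs⟩
    rw [T.mem_level_iff hk] at hn hs
    rw [T.Rmat_eq_fsum, T.Rmat_eq_fsum, hn, hs]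
  · intro h
    rw [T.Rmat_eq_fsum, T.Rmat_eq_fsum] at h
    have hls : T.lca m n = T.lca m s :=
      T.fsum_inj r hr (T.lca_mem_left m n) (T.lca_mem_left m s) h
    refine ⟨T.depth (T.lca m n), T.depth_mono (T.lca_mem_left m n), ?_, ?_⟩
    · rw [T.mem_level_iff (T.depth_mono (T.lca_mem_left m n))]
      exact (T.anc_of_mem (T.lca_mem_left m n)).symm
    · rw [T.mem_level_iff (T.depth_mono (T.lca_mem_left m n))]
      rw [← hls]
      exact (T.anc_of_mem (T.lca_mem_left m n)).symm
end

section
/- Let G and G' be rooted trees on the same vertex set with path-resistance matrices R and R', and let m be a node such that A_m(G) = A_m(G') and N_m^k(G) = N_m^k(G') for all 0 ≤ k ≤ d_m, with the resistances of corresponding edges agreeing. Then R e_m = R' e_m, i.e., the m-th columns of the two path-resistance matrices coincide. -/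
open scoped Classical

namespace GridTree

variable {V : Type} [Fintype V] [DecidableEq V]

lemma iterate_root (T : GridTree V) (j : ℕ) : T.parent^[j] T.root = T.root := by
  induction j with
  | zero => rfl
  | succ n ih => rw [Function.iterate_succ_apply', ih, T.parent_root]

lemma depth_spec (T : GridTree V) (v : V) : T.parent^[T.depth v] v = T.root :=
  Nat.find_spec (T.reaches v)

lemma mem_ancSet_iff_s19 (T : GridTree V) (m c : V) :
    c ∈ T.ancSet m ↔ ∃ k ≤ T.depth m, T.anc m k = c := by
  constructor
  · rintro ⟨j, rfl⟩
    by_cases hj : j ≤ T.depth m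
    · exact ⟨T.depth m - j, Nat.sub_le _ _, by
        unfold anc; rw [Nat.sub_sub_self hj]⟩
    · refine ⟨0, Nat.zero_le _, ?_⟩
      unfold anc
      rw [Nat.sub_zero, depth_spec]
      have h1 : j = (j - T.depth m) + T.depth m := by omega
      rw [h1, Function.iterate_add_apply, depth_spec, iterate_root]
  · rintro ⟨k, hk, rfl⟩
    exact ⟨T.depth m - k, rfl⟩

lemma anc_depth (T : GridTree V) (m : V) : T.anc m (T.depth m) = m := by
  unfold anc; rw [Nat.sub_self]; rfl

lemma anc_succ (T : GridTree V) (m : V) (k : ℕ) (hk : k < T.depth m) :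
    T.parent (T.anc m (k + 1)) = T.anc m k := by
  unfold anc
  have h : T.depth m - k = (T.depth m - (k + 1)) + 1 := by omega
  rw [h, Function.iterate_succ_apply']

lemma desc_subset_parent (T : GridTree V) (c : V) : T.desc c ⊆ T.desc (T.parent c) := by
  rintro n ⟨j, hj⟩
  exact ⟨j + 1, by rw [Function.iterate_succ_apply', hj]⟩

end GridTree

/-- Theorem 2 (sufficiency): if `m` has the same depth, the same ancestors
(with equal resistances on the corresponding path edges), and the same level
sets in the two trees, then the `m`-th columns of the path-resistance matrices
coincide. -/
theorem stmt19 {V : Type} [Fintype V] [DecidableEq V] (T T' : GridTree V)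
    (hroot : T.root = T'.root)
    (r r' : V → ℝ)
    (hr : ∀ c, c ≠ T.root → 0 < r c) (hr' : ∀ c, c ≠ T'.root → 0 < r' c)
    (m : V)
    (hdepth : T.depth m = T'.depth m)
    (hanc : ∀ k ≤ T.depth m, T.anc m k = T'.anc m k)
    (hres : ∀ c ∈ T.ancSet m, c ≠ T.root → r c = r' c)
    (hlevel : ∀ k ≤ T.depth m, T.level m k = T'.level m k) :
    ∀ n, T.Rmat r n m = T'.Rmat r' n m := by
  have hdesc : ∀ j k, k ≤ T.depth m → T.depth m - k = j →
      T.desc (T.anc m k) = T'.desc (T'.anc m k) := by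
    intro j
    induction j with
    | zero =>
      intro k hk h0
      have hk' : k = T.depth m := by omega
      subst hk'
      have h1 := hlevel (T.depth m) le_rfl
      rw [GridTree.level, GridTree.level, if_pos rfl, if_pos hdepth] at h1
      rw [GridTree.anc_depth, hdepth, GridTree.anc_depth]
      exact h1
    | succ j ih =>
      intro k hk hj
      have hklt : k < T.depth m := by omega
      have hklt' : k < T'.depth m := by omega
      have hd1 := ih (k + 1) (by omega) (by omega)
      have h1 := hlevel k (by omega)
      rw [GridTree.level, GridTree.level, if_neg (by omega : k ≠ T.depth m),
        if_neg (by omega : k ≠ T'.depth m)] at h1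
      have hs : T.desc (T.anc m (k + 1)) ⊆ T.desc (T.anc m k) := by
        rw [← GridTree.anc_succ T m k hklt]
        exact GridTree.desc_subset_parent T _
      have hs' : T'.desc (T'.anc m (k + 1)) ⊆ T'.desc (T'.anc m k) := by
        rw [← GridTree.anc_succ T' m k hklt']
        exact GridTree.desc_subset_parent T' _
      calc T.desc (T.anc m k)
          = T.desc (T.anc m k) \ T.desc (T.anc m (k + 1)) ∪ T.desc (T.anc m (k + 1)) :=
            (Set.diff_union_of_subset hs).symm
        _ = T'.desc (T'.anc m k) \ T'.desc (T'.anc m (k + 1)) ∪ T'.desc (T'.anc m (k + 1)) := by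
            rw [h1, hd1]
        _ = T'.desc (T'.anc m k) := Set.diff_union_of_subset hs'
  have hAm : T.ancSet m = T'.ancSet m := by
    ext c
    rw [GridTree.mem_ancSet_iff_s19, GridTree.mem_ancSet_iff_s19]
    constructor
    · rintro ⟨k, hk, rfl⟩
      exact ⟨k, by omega, (hanc k hk).symm⟩
    · rintro ⟨k, hk, rfl⟩
      exact ⟨k, by omega, hanc k (by omega)⟩
  intro n
  unfold GridTree.Rmat
  apply Finset.sum_congr rfl
  intro c _
  have key : (c ∈ T.ancSet n ∧ c ∈ T.ancSet m ∧ c ≠ T.root) ↔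
      (c ∈ T'.ancSet n ∧ c ∈ T'.ancSet m ∧ c ≠ T'.root) := by
    constructor
    · rintro ⟨hn, hm, hc⟩
      obtain ⟨k, hk, rfl⟩ := (GridTree.mem_ancSet_iff_s19 T m c).mp hm
      have hd := hdesc (T.depth m - k) k hk rfl
      refine ⟨?_, hAm ▸ hm, hroot ▸ hc⟩
      have hmem : n ∈ T.desc (T.anc m k) := hn
      rw [hd] at hmem
      show n ∈ T'.desc (T.anc m k)
      rw [hanc k hk]
      exact hmem
    · rintro ⟨hn, hm, hc⟩
      have hm2 : c ∈ T.ancSet m := hAm ▸ hm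
      obtain ⟨k, hk, rfl⟩ := (GridTree.mem_ancSet_iff_s19 T m c).mp hm2
      have hd := hdesc (T.depth m - k) k hk rfl
      refine ⟨?_, hm2, hroot ▸ hc⟩
      have hmem : n ∈ T'.desc (T.anc m k) := hn
      rw [hanc k hk, ← hd] at hmem
      exact hmem
  by_cases h : c ∈ T.ancSet n ∧ c ∈ T.ancSet m ∧ c ≠ T.root
  · rw [if_pos h, if_pos (key.mp h)]
    exact hres c h.2.1 h.2.2
  · rw [if_neg h, if_neg (fun h' => h (key.mpr h'))]
end
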